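/- The local rate function L is jointly lower semicontinuous in (x,D): if (x⁽ⁿ⁾, D⁽ⁿ⁾) is a sequence in ℝ₊^R × ℝ^R converging to (x,D), with D⁽ⁿ⁾_ij ≥ 0 for all ij ∉ Λ(x⁽ⁿ⁾) and all n, and D_ij ≥ 0 for all ij ∉ Λ(x), then liminf_{n→∞} L(x⁽ⁿ⁾, D⁽ⁿ⁾) ≥ L(x, D). -/

import Mathlib

open Classical Filter MeasureTheory
open scoped ENNReal

noncomputable section

/-- The M/M/1 cost `l(D‖λ,μ)` that a suitably normalized `M/M/1` queue with arrival rate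
`λ` and service rate `μ` follows the drift `D`.  (Lean's conventions `Real.log 0 = 0` and
`0 * y = 0` implement the convention `0 · log 0 = 0`.) -/
def mmCost (D lam mu : ℝ) : ℝ :=
  D * Real.log ((D + Real.sqrt (D ^ 2 + 4 * lam * mu)) / (2 * lam))
    + lam + mu - Real.sqrt (D ^ 2 + 4 * lam * mu)

/-- The relative entropy `I_p(ν‖λ)` of Poisson processes of intensities `ν` and `λ`.
(Lean's conventions `x / 0 = 0`, `Real.log 0 = 0` and `0 * y = 0` implement the
conventions `0/0 = 0` and `0 · log 0 = 0`.) -/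
def poissonEntropy (nu lam : ℝ) : ℝ := nu * Real.log (nu / lam) - nu + lam

/-- A star network: a finite set `S` of channels with capacities `C i > 0`, and a set `R`
of routes, each route `r` being an unordered pair of distinct channels
`{fst r, snd r}`, with arrival rates `lam r > 0` and service parameters `mu r > 0`. -/
structure StarNetwork (S R : Type*) where
  /-- one endpoint of a route -/
  fst : R → S
  /-- the other endpoint of a route -/
  snd : R → S
  fst_ne_snd : ∀ r, fst r ≠ snd r
  /-- the capacity of each channel -/
  C : S → ℝ
  C_pos : ∀ i, 0 < C i
  /-- the arrival rate on each route -/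
  lam : R → ℝ
  lam_pos : ∀ r, 0 < lam r
  /-- the service parameter of each route -/
  mu : R → ℝ
  mu_pos : ∀ r, 0 < mu r

namespace StarNetwork

variable {S R : Type*} [Fintype S] [Fintype R]

/-- `N.touches i r` means that channel `i` is one of the two endpoints of route `r`. -/
def touches (N : StarNetwork S R) (i : S) (r : R) : Prop :=
  N.fst r = i ∨ N.snd r = i

/-- The load `x_i = ∑_{j : ij ∈ R} x_ij` of channel `i`. -/
def load (N : StarNetwork S R) (x : R → ℝ) (i : S) : ℝ :=
  ∑ r : R, if N.touches i r then x r else 0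

/-- The service rate `μ_ij(x) = μ_ij · x_ij · min (C_i / x_i) (C_j / x_j)` if `x_ij > 0`,
and `μ_ij(x) = 0` if `x_ij = 0`. -/
def srv (N : StarNetwork S R) (x : R → ℝ) (r : R) : ℝ :=
  if 0 < x r then
    N.mu r * x r *
      min (N.C (N.fst r) / N.load x (N.fst r)) (N.C (N.snd r) / N.load x (N.snd r))
  else 0

/-- The face `Λ(x) = {ij ∈ R : x_ij > 0}` of saturated routes. -/
def face (N : StarNetwork S R) (x : R → ℝ) : Set R := {r | 0 < x r}

/-- The jammed routes `Λ₁(x)`: routes `ij` with `x_ij = 0` such that some route of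
`Λ(x)` contains `i` or contains `j`. -/
def jammed (N : StarNetwork S R) (x : R → ℝ) : Set R :=
  {r | x r = 0 ∧ ∃ r' ∈ N.face x, N.touches (N.fst r) r' ∨ N.touches (N.snd r) r'}

/-- The ergodic routes `Λ₂(x) = R \ (Λ(x) ∪ Λ₁(x))`. -/
def ergodicRoutes (N : StarNetwork S R) (x : R → ℝ) : Set R :=
  (N.face x ∪ N.jammed x)ᶜ

/-- The local rate function `L(x, D) = ∑_{ij ∈ Λ(x) ∪ Λ₁(x)} l(D_ij ‖ λ_ij, μ_ij(x))`
(its finite part; `L(x,D) = +∞` when `D_ij < 0` for some `ij ∉ Λ(x)`). -/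
def locRate (N : StarNetwork S R) (x D : R → ℝ) : ℝ :=
  ∑ r : R, if r ∈ N.face x ∪ N.jammed x then mmCost (D r) (N.lam r) (N.srv x r) else 0

/-- The sample path rate function `I_T(φ) = ∫₀ᵀ L(φ(t), φ̇(t)) dt ∈ [0,∞]` if `φ` is
absolutely continuous on `[0,T]`, and `I_T(φ) = +∞` otherwise (the infimum over an
empty family is `⊤`; any two densities of `φ` coincide a.e. on `[0,T]`, so the
infimum is the common value of the integral). -/
def pathRate (N : StarNetwork S R) (T : ℝ) (φ : ℝ → R → ℝ) : ℝ≥0∞ :=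
  ⨅ (f : ℝ → R → ℝ) (_ : IntegrableOn f (Set.Icc 0 T))
    (_ : ∀ t ∈ Set.Icc (0 : ℝ) T, φ t = φ 0 + ∫ s in (0 : ℝ)..t, f s),
    ∫⁻ t in Set.Ioc (0 : ℝ) T, ENNReal.ofReal (N.locRate (φ t) (f t))

end StarNetwork

/-!
`L` is a finite sum of route terms, so it suffices to show that each term is lower semicontinuous
on the effective domain of `L`. A route of `Λ(x) ∪ Λ₁(x)` stays in `Λ ∪ Λ₁` near `x`, and its
service rate is continuous there: on a jammed route `ij` it is at most `μ_ij x_ij C_i / x_i`,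
where the load `x_i` of the shared channel stays away from `0`. The cost `l(D‖λ,μ)` is continuous
on its domain except at `D = μ = 0`, where it is only lower semicontinuous. An ergodic route
contributes `0` at `x` and a nonnegative term nearby, since `l ≥ 0` is a sum of two Poisson
relative entropies.
-/

open Real InformationTheory Topology

lemma poissonEntropy_eq_mul_klFun {nu lam : ℝ} (hlam : lam ≠ 0) :
    poissonEntropy nu lam = lam * klFun (nu / lam) := by
  rw [poissonEntropy, klFun]
  field_simp
  ring

lemma poissonEntropy_nonneg {nu lam : ℝ} (hnu : 0 ≤ nu) (hlam : 0 < lam) :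
    0 ≤ poissonEntropy nu lam := by
  rw [poissonEntropy_eq_mul_klFun hlam.ne']
  exact mul_nonneg hlam.le (klFun_nonneg (div_nonneg hnu hlam.le))

lemma mmCost_zero_right {D : ℝ} (lam : ℝ) (hD : 0 ≤ D) :
    mmCost D lam 0 = poissonEntropy D lam := by
  simp only [mmCost, poissonEntropy, mul_zero, add_zero, sqrt_sq hD]
  rw [show (D + D) / (2 * lam) = D / lam by ring]
  ring

lemma abs_lt_sqrt_sq_add {D c : ℝ} (hc : 0 < c) : |D| < √(D ^ 2 + c) := by
  rw [← sqrt_sq_eq_abs]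
  exact sqrt_lt_sqrt (sq_nonneg D) (lt_add_of_pos_right _ hc)

/-- With `s = √(D² + 4λμ)`, `ν = (s + D) / 2` is the tilted arrival rate and `w = (s - D) / 2` the
tilted service rate: `ν - w = D` and `ν w = λ μ`. -/
lemma mmCost_eq_poissonEntropy_add {D lam mu : ℝ} (hlam : 0 < lam) (hmu : 0 < mu) :
    mmCost D lam mu = poissonEntropy ((√(D ^ 2 + 4 * lam * mu) + D) / 2) lam
      + poissonEntropy ((√(D ^ 2 + 4 * lam * mu) - D) / 2) mu := by
  set s := √(D ^ 2 + 4 * lam * mu) with hs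
  have hs2 : s ^ 2 = D ^ 2 + 4 * lam * mu := sq_sqrt (by positivity)
  obtain ⟨hsD, hsD'⟩ := abs_lt.1 (abs_lt_sqrt_sq_add (D := D) (by positivity : 0 < 4 * lam * mu))
  have hlog : log ((s - D) / 2 / mu) = -log ((s + D) / 2 / lam) := by
    have hw : 0 < (s - D) / 2 / mu := div_pos (half_pos (sub_pos.2 hsD')) hmu
    have hnu : 0 < (s + D) / 2 / lam := div_pos (half_pos (by linarith)) hlam
    rw [eq_neg_iff_add_eq_zero, ← log_mul hw.ne' hnu.ne',
      show (s - D) / 2 / mu * ((s + D) / 2 / lam) = 1 by field_simp; nlinarith, log_one]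
  rw [mmCost, poissonEntropy, poissonEntropy, hlog, ← hs,
    show (D + s) / (2 * lam) = (s + D) / 2 / lam by ring]
  ring

lemma mmCost_nonneg {D lam mu : ℝ} (hlam : 0 < lam) (hmu : 0 ≤ mu) (hdom : 0 < mu ∨ 0 ≤ D) :
    0 ≤ mmCost D lam mu := by
  obtain hmu | rfl := hmu.lt_or_eq
  · have hsD := abs_lt.1 (abs_lt_sqrt_sq_add (D := D) (by positivity : 0 < 4 * lam * mu))
    rw [mmCost_eq_poissonEntropy_add hlam hmu]
    exact add_nonneg (poissonEntropy_nonneg (by linarith) hlam)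
      (poissonEntropy_nonneg (by linarith) hmu)
  · have hD := hdom.resolve_left (lt_irrefl 0)
    rw [mmCost_zero_right lam hD]
    exact poissonEntropy_nonneg hD hlam

lemma continuousAt_mmCost {D lam mu : ℝ} (hlam : lam ≠ 0)
    (h : 0 < D + √(D ^ 2 + 4 * lam * mu)) :
    ContinuousAt (fun p : ℝ × ℝ => mmCost p.1 lam p.2) (D, mu) := by
  unfold mmCost
  fun_prop (disch := exact div_ne_zero h.ne' (mul_ne_zero two_ne_zero hlam))

lemma continuous_mul_log_div_const {lam : ℝ} (hlam : lam ≠ 0) :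
    Continuous fun y : ℝ => y * log (y / lam) := by
  convert (continuous_mul_log.comp (continuous_id.div_const lam)).const_mul lam using 2 with y
  simp only [Function.comp_apply, id]
  field_simp

/-- Near `(0, 0)` the term `D log(…)` can blow up to `+∞` but not to `-∞`: for `D ≤ 0` the
logarithm is nonpositive, and for `D > 0` its argument is at least `D / λ`. -/
lemma mul_log_max_le_mmCost {D lam mu : ℝ} (hlam : 0 < lam) (hmu : 0 ≤ mu)
    (hsmall : D + √(D ^ 2 + 4 * lam * mu) ≤ 2 * lam) :
    max D 0 * log (max D 0 / lam) + lam + mu - √(D ^ 2 + 4 * lam * mu) ≤ mmCost D lam mu := by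
  suffices max D 0 * log (max D 0 / lam) ≤
      D * log ((D + √(D ^ 2 + 4 * lam * mu)) / (2 * lam)) by
    rw [mmCost]; linarith
  have hsD := abs_le.1 (show |D| ≤ √(D ^ 2 + 4 * lam * mu) by
    rw [← sqrt_sq_eq_abs]; exact sqrt_le_sqrt (by nlinarith))
  rcases le_or_gt D 0 with hD | hD
  · rw [max_eq_right hD, zero_mul]
    refine mul_nonneg_of_nonpos_of_nonpos hD
      (log_nonpos (div_nonneg (by linarith) (by positivity)) ?_)
    rwa [div_le_one (by positivity)]
  · rw [max_eq_left hD.le]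
    refine mul_le_mul_of_nonneg_left (log_le_log (by positivity) ?_) hD.le
    rw [div_le_div_iff₀ hlam (by positivity)]
    nlinarith

lemma lowerSemicontinuousWithinAt_mmCost_zero {lam : ℝ} (hlam : 0 < lam) :
    LowerSemicontinuousWithinAt (fun p : ℝ × ℝ => mmCost p.1 lam p.2) {p | 0 ≤ p.2} (0, 0) := by
  set g : ℝ × ℝ → ℝ := fun p =>
    max p.1 0 * log (max p.1 0 / lam) + lam + p.2 - √(p.1 ^ 2 + 4 * lam * p.2)
  have hg : Continuous g :=
    ((((continuous_mul_log_div_const hlam.ne').comp (continuous_fst.max continuous_const)).add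
      continuous_const).add continuous_snd).sub (by fun_prop)
  have hsmall : ∀ᶠ p : ℝ × ℝ in 𝓝 (0, 0), p.1 + √(p.1 ^ 2 + 4 * lam * p.2) < 2 * lam := by
    have : Continuous fun p : ℝ × ℝ => p.1 + √(p.1 ^ 2 + 4 * lam * p.2) := by fun_prop
    exact this.continuousAt.eventually_lt continuousAt_const (by simpa using hlam)
  intro y hy
  have hy' : y < g (0, 0) := by simpa [g, mmCost] using hy
  filter_upwards [nhdsWithin_le_nhds (hsmall.and ((hg.tendsto (0, 0)).eventually_const_lt hy')),
    self_mem_nhdsWithin] with p ⟨hp, hgp⟩ hp2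
  exact hgp.trans_le (mul_log_max_le_mmCost hlam hp2 hp.le)

lemma lowerSemicontinuousWithinAt_mmCost {D lam mu : ℝ} (hlam : 0 < lam) (hmu : 0 ≤ mu)
    (hdom : 0 < mu ∨ 0 ≤ D) :
    LowerSemicontinuousWithinAt (fun p : ℝ × ℝ => mmCost p.1 lam p.2) {p | 0 ≤ p.2} (D, mu) := by
  by_cases h0 : D = 0 ∧ mu = 0
  · obtain ⟨rfl, rfl⟩ := h0
    exact lowerSemicontinuousWithinAt_mmCost_zero hlam
  have hpos : 0 < D + √(D ^ 2 + 4 * lam * mu) := by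
    obtain hmu | rfl := hmu.lt_or_eq
    · linarith [neg_abs_le D, abs_lt_sqrt_sq_add (D := D) (by positivity : 0 < 4 * lam * mu)]
    · have hD : 0 < D := (hdom.resolve_left (lt_irrefl 0)).lt_of_ne' fun h => h0 ⟨h, rfl⟩
      positivity
  exact (continuousAt_mmCost hlam.ne' hpos).continuousWithinAt.lowerSemicontinuousWithinAt

theorem LowerSemicontinuousWithinAt.coe_le_liminf_comp {α ι : Type*} [TopologicalSpace α]
    {f : α → ℝ} {s : Set α} {a : α} {l : Filter ι} {u : ι → α}
    (hf : LowerSemicontinuousWithinAt f s a) (hu : Tendsto u l (𝓝[s] a)) :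
    (f a : EReal) ≤ liminf (fun n => (f (u n) : EReal)) l :=
  (continuous_coe_real_ereal.continuousAt.comp_lowerSemicontinuousWithinAt hf
    EReal.coe_strictMono.monotone).le_liminf.trans (liminf_le_liminf_of_le hu)

namespace StarNetwork

variable {S R : Type*} (N : StarNetwork S R)

lemma touches_fst (r : R) : N.touches (N.fst r) r := Or.inl rfl

lemma touches_snd (r : R) : N.touches (N.snd r) r := Or.inr rfl

lemma exists_touches_of_mem_jammed {x : R → ℝ} {r : R} (hr : r ∈ N.jammed x) :
    ∃ r' ∈ N.face x, ∃ i, N.touches i r ∧ N.touches i r' := by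
  obtain ⟨-, r', hr', h | h⟩ := hr
  exacts [⟨r', hr', _, N.touches_fst r, h⟩, ⟨r', hr', _, N.touches_snd r, h⟩]

lemma eventually_mem_face_union_jammed {x : R → ℝ} {r : R} (hr : r ∈ N.face x ∪ N.jammed x) :
    ∀ᶠ x' in 𝓝[{x | ∀ r, 0 ≤ x r}] x, r ∈ N.face x' ∪ N.jammed x' := by
  obtain ⟨r', hr', hshare⟩ : ∃ r' ∈ N.face x,
      r' = r ∨ N.touches (N.fst r) r' ∨ N.touches (N.snd r) r' := by
    rcases hr with h | ⟨-, r', hr', h⟩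
    exacts [⟨r, h, Or.inl rfl⟩, ⟨r', hr', Or.inr h⟩]
  filter_upwards [nhdsWithin_le_nhds
      (continuousAt_const.eventually_lt (continuous_apply r').continuousAt hr'),
    self_mem_nhdsWithin] with x' hx'r' hx'
  obtain rfl | h := hshare
  · exact Or.inl hx'r'
  · obtain hpos | hzero := (hx' r).lt_or_eq
    exacts [Or.inl hpos, Or.inr ⟨hzero.symm, r', hx'r', h⟩]

/-- The set where `L < +∞`, intersected with `x ≥ 0`. -/
def locRateDomain : Set ((R → ℝ) × (R → ℝ)) :=
  {p | (∀ r, 0 ≤ p.1 r) ∧ ∀ r ∉ N.face p.1, 0 ≤ p.2 r}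

variable [Fintype R]

lemma load_nonneg {x : R → ℝ} (hx : ∀ r, 0 ≤ x r) (i : S) : 0 ≤ N.load x i :=
  Finset.sum_nonneg fun r _ => by split_ifs <;> simp [hx r]

lemma le_load {x : R → ℝ} (hx : ∀ r, 0 ≤ x r) {i : S} {r : R} (h : N.touches i r) :
    x r ≤ N.load x i := by
  have := Finset.single_le_sum (f := fun r' => if N.touches i r' then x r' else 0)
    (fun r' _ => by split_ifs <;> simp [hx r']) (Finset.mem_univ r)
  simpa [load, h] using this

lemma continuous_load (i : S) : Continuous fun x => N.load x i :=
  continuous_finsetSum _ fun r _ => by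
    split_ifs
    exacts [continuous_apply r, continuous_const]

lemma srv_of_pos {x : R → ℝ} {r : R} (h : 0 < x r) :
    N.srv x r = N.mu r * x r *
      min (N.C (N.fst r) / N.load x (N.fst r)) (N.C (N.snd r) / N.load x (N.snd r)) :=
  if_pos h

lemma srv_nonneg {x : R → ℝ} (hx : ∀ r, 0 ≤ x r) (r : R) : 0 ≤ N.srv x r := by
  unfold srv
  split_ifs
  · exact mul_nonneg (mul_nonneg (N.mu_pos r).le (hx r))
      (le_min (div_nonneg (N.C_pos _).le (N.load_nonneg hx _))
        (div_nonneg (N.C_pos _).le (N.load_nonneg hx _)))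
  · exact le_rfl

lemma srv_pos {x : R → ℝ} (hx : ∀ r, 0 ≤ x r) {r : R} (h : 0 < x r) : 0 < N.srv x r := by
  have := h.trans_le (N.le_load hx (N.touches_fst r))
  have := h.trans_le (N.le_load hx (N.touches_snd r))
  have := N.mu_pos r
  have := N.C_pos (N.fst r)
  have := N.C_pos (N.snd r)
  rw [N.srv_of_pos h]
  positivity

lemma srv_le {x : R → ℝ} (hx : ∀ r, 0 ≤ x r) {i : S} {r : R} (h : N.touches i r) :
    N.srv x r ≤ N.mu r * x r * (N.C i / N.load x i) := by
  obtain hr | hr := (hx r).lt_or_eq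
  · rw [N.srv_of_pos hr]
    refine mul_le_mul_of_nonneg_left ?_ (mul_nonneg (N.mu_pos r).le hr.le)
    rcases h with rfl | rfl
    exacts [min_le_left _ _, min_le_right _ _]
  · simp [srv, ← hr]

lemma continuousAt_srv {x : R → ℝ} (hx : ∀ r, 0 ≤ x r) {r : R} (hr : 0 < x r) :
    ContinuousAt (fun x => N.srv x r) x := by
  have hfst := hr.trans_le (N.le_load hx (N.touches_fst r))
  have hsnd := hr.trans_le (N.le_load hx (N.touches_snd r))
  have hformula : ContinuousAt (fun x : R → ℝ => N.mu r * x r *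
      min (N.C (N.fst r) / N.load x (N.fst r)) (N.C (N.snd r) / N.load x (N.snd r))) x :=
    ((continuous_apply r).continuousAt.const_mul _).mul
      ((continuousAt_const.div (N.continuous_load _).continuousAt hfst.ne').min
        (continuousAt_const.div (N.continuous_load _).continuousAt hsnd.ne'))
  refine hformula.congr_of_eventuallyEq ?_
  filter_upwards [continuousAt_const.eventually_lt (continuous_apply r).continuousAt hr]
    with x' hx' using N.srv_of_pos hx'

lemma continuousWithinAt_srv_of_mem_jammed {x : R → ℝ} (hx : ∀ r, 0 ≤ x r) {r : R}
    (hr : r ∈ N.jammed x) :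
    ContinuousWithinAt (fun x => N.srv x r) {x | ∀ r, 0 ≤ x r} x := by
  obtain ⟨r', hr', i, hi, hi'⟩ := N.exists_touches_of_mem_jammed hr
  have hload : 0 < N.load x i := (show 0 < x r' from hr').trans_le (N.le_load hx hi')
  have hbound : ContinuousAt (fun x : R → ℝ => N.mu r * x r * (N.C i / N.load x i)) x :=
    ((continuous_apply r).continuousAt.const_mul _).mul
      (continuousAt_const.div (N.continuous_load i).continuousAt hload.ne')
  have hxr : x r = 0 := hr.1
  have hsrv : N.srv x r = 0 := by simp [srv, hxr]
  rw [ContinuousWithinAt, hsrv]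
  refine squeeze_zero' (eventually_nhdsWithin_of_forall fun x' hx' => N.srv_nonneg hx' r)
    (eventually_nhdsWithin_of_forall fun x' hx' => N.srv_le hx' hi) ?_
  simpa [hxr] using hbound.tendsto.mono_left nhdsWithin_le_nhds

lemma continuousWithinAt_srv {x : R → ℝ} (hx : ∀ r, 0 ≤ x r) {r : R}
    (hr : r ∈ N.face x ∪ N.jammed x) :
    ContinuousWithinAt (fun x => N.srv x r) {x | ∀ r, 0 ≤ x r} x :=
  hr.elim (fun h => (N.continuousAt_srv hx h).continuousWithinAt)
    (N.continuousWithinAt_srv_of_mem_jammed hx)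

lemma srv_pos_or_nonneg_of_mem_locRateDomain {p : (R → ℝ) × (R → ℝ)}
    (hp : p ∈ N.locRateDomain) (r : R) : 0 < N.srv p.1 r ∨ 0 ≤ p.2 r := by
  by_cases h : r ∈ N.face p.1
  exacts [Or.inl (N.srv_pos hp.1 h), Or.inr (hp.2 r h)]

def routeCost (x D : R → ℝ) (r : R) : ℝ :=
  if r ∈ N.face x ∪ N.jammed x then mmCost (D r) (N.lam r) (N.srv x r) else 0

lemma routeCost_nonneg {p : (R → ℝ) × (R → ℝ)} (hp : p ∈ N.locRateDomain) (r : R) :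
    0 ≤ N.routeCost p.1 p.2 r := by
  unfold routeCost
  split_ifs
  · exact mmCost_nonneg (N.lam_pos r) (N.srv_nonneg hp.1 r)
      (N.srv_pos_or_nonneg_of_mem_locRateDomain hp r)
  · exact le_rfl

lemma lowerSemicontinuousOn_routeCost (r : R) :
    LowerSemicontinuousOn (fun q => N.routeCost q.1 q.2 r) N.locRateDomain := by
  intro p hp
  by_cases hr : r ∈ N.face p.1 ∪ N.jammed p.1
  · have hfst : Tendsto Prod.fst (𝓝[N.locRateDomain] p) (𝓝[{x | ∀ r, 0 ≤ x r}] p.1) :=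
      continuous_fst.continuousWithinAt.tendsto_nhdsWithin fun q hq => hq.1
    have hpair : ContinuousWithinAt (fun q : (R → ℝ) × (R → ℝ) => (q.2 r, N.srv q.1 r))
        N.locRateDomain p :=
      ((continuous_apply r).comp continuous_snd).continuousWithinAt.prodMk
        ((N.continuousWithinAt_srv hp.1 hr).comp continuous_fst.continuousWithinAt
          fun q hq => hq.1)
    have hlsc := LowerSemicontinuousWithinAt.comp
      (g := fun q : (R → ℝ) × (R → ℝ) => (q.2 r, N.srv q.1 r))
      (lowerSemicontinuousWithinAt_mmCost (N.lam_pos r) (N.srv_nonneg hp.1 r)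
        (N.srv_pos_or_nonneg_of_mem_locRateDomain hp r)) hpair
      fun q (hq : q ∈ N.locRateDomain) => N.srv_nonneg hq.1 r
    refine hlsc.congr_of_eventuallyEq hp ?_
    filter_upwards [hfst.eventually (N.eventually_mem_face_union_jammed hr)] with q hq
    simp [routeCost, hq]
  · intro y hy
    have hzero : N.routeCost p.1 p.2 r = 0 := if_neg hr
    filter_upwards [self_mem_nhdsWithin] with q hq
    exact (hy.trans_eq hzero).trans_le (N.routeCost_nonneg hq r)

theorem lowerSemicontinuousOn_locRate :
    LowerSemicontinuousOn (fun q => N.locRate q.1 q.2) N.locRateDomain :=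
  lowerSemicontinuousOn_sum fun r _ => N.lowerSemicontinuousOn_routeCost r

end StarNetwork

theorem locRate_lowerSemicontinuous_general {S R : Type*} [Fintype R]
    (N : StarNetwork S R) (x D : R → ℝ) (xs Ds : ℕ → R → ℝ)
    (hx : ∀ r, 0 ≤ x r) (hxs : ∀ n r, 0 ≤ xs n r)
    (hconv : Tendsto (fun n => (xs n, Ds n)) atTop (nhds (x, D)))
    (hDs : ∀ n, ∀ r ∉ N.face (xs n), 0 ≤ Ds n r)
    (hD : ∀ r ∉ N.face x, 0 ≤ D r) :
    (N.locRate x D : EReal) ≤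
      Filter.liminf (fun n => (N.locRate (xs n) (Ds n) : EReal)) atTop :=
  (N.lowerSemicontinuousOn_locRate.lowerSemicontinuousWithinAt ⟨hx, hD⟩).coe_le_liminf_comp
    (tendsto_nhdsWithin_iff.2 ⟨hconv, .of_forall fun n => ⟨hxs n, hDs n⟩⟩)

/-- The local rate function `L` is jointly lower semicontinuous in `(x,D)`: if
`(x⁽ⁿ⁾, D⁽ⁿ⁾)` is a sequence in `ℝ₊^R × ℝ^R` converging to `(x,D)`, with `D⁽ⁿ⁾_ij ≥ 0`
for all `ij ∉ Λ(x⁽ⁿ⁾)` and all `n`, and `D_ij ≥ 0` for all `ij ∉ Λ(x)`, then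
`liminf_{n→∞} L(x⁽ⁿ⁾, D⁽ⁿ⁾) ≥ L(x, D)`. -/
theorem locRate_lowerSemicontinuous {S R : Type*} [Fintype S] [Fintype R]
    (N : StarNetwork S R) (x D : R → ℝ) (xs Ds : ℕ → R → ℝ)
    (hx : ∀ r, 0 ≤ x r) (hxs : ∀ n r, 0 ≤ xs n r)
    (hconv : Tendsto (fun n => (xs n, Ds n)) atTop (nhds (x, D)))
    (hDs : ∀ n, ∀ r ∉ N.face (xs n), 0 ≤ Ds n r)
    (hD : ∀ r ∉ N.face x, 0 ≤ D r) :
    (N.locRate x D : EReal) ≤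
      Filter.liminf (fun n => (N.locRate (xs n) (Ds n) : EReal)) atTop :=
  locRate_lowerSemicontinuous_general N x D xs Ds hx hxs hconv hDs hD
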